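/- arXiv:1604.00346 — 5 statements merged into one kernel-verified Lean document; each statement's English description precedes it below -/
import Mathlib

section
/- Last activated write determines the variant: for every base program B : α → Option β, every list L of conditional delta operations, every product p : ρ, and every reference k : α, the value variant B L p k equals the payload of the last operation of L whose reference equals k and whose activation condition holds at p, if such an operation exists, and equals B k otherwise. Formally (using classical decidability for the filter): variant B L p k = Option.elim ((L.filter (fun op => op.2.1 = k ∧ op.1 p)).getLast?) (B k) (fun op => op.2.2). -/
open Classical in
/-- The variant generated for product `p` from base program `B` and list `L` of
conditional delta operations. -/
noncomputable def variant {α β ρ : Type*} (B : α → Option β)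
    (L : List ((ρ → Prop) × α × Option β)) (p : ρ) : α → Option β :=
  L.foldl (fun P op => if op.1 p then Function.update P op.2.1 op.2.2 else P) B

theorem List.getLast?_filter_concat {α : Type*} (f : α → Bool) (l : List α) (a : α) :
    ((l ++ [a]).filter f).getLast? = if f a then some a else (l.filter f).getLast? := by
  cases h : f a <;> simp [List.filter_append, h]

open Classical in
theorem variant_concat {α β ρ : Type*} (B : α → Option β)
    (L : List ((ρ → Prop) × α × Option β)) (p : ρ) (op : (ρ → Prop) × α × Option β) :
    variant B (L ++ [op]) p =
      if op.1 p then Function.update (variant B L p) op.2.1 op.2.2 else variant B L p :=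
  List.foldl_concat _ _ _ _

open Classical in
/-- Last activated write determines the variant. -/
theorem variant_eq_getLast_filter {α β ρ : Type*} (B : α → Option β)
    (L : List ((ρ → Prop) × α × Option β)) (p : ρ) (k : α) :
    variant B L p k =
      ((L.filter (fun op => decide (op.2.1 = k ∧ op.1 p))).getLast?).elim
        (B k) (fun op => op.2.2) := by
  induction L using List.reverseRecOn with
  | nil => rfl
  | append_singleton L op ih =>
    rw [variant_concat, List.getLast?_filter_concat]
    by_cases hc : op.1 p
    · by_cases hk : op.2.1 = k
      · subst hk
        simp [hc]
      · simp [hc, hk, Function.update_of_ne (Ne.symm hk), ih]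
    · simp [hc, ih]
end

section
/- Unambiguity / order-independence of variant generation: let L and L' be lists of conditional delta operations of the same length and suppose there is a bijection σ : Fin L.length ≃ Fin L'.length such that L'.get (σ i) = L.get i for all i, and such that σ preserves the relative order of operations acting on the same reference, i.e. whenever i < j and (L.get i).2.1 = (L.get j).2.1, then σ i < σ j. Then for every base program B and every product p, variant B L' p = variant B L p. -/
namespace List

theorem setOf_get_eq_image {γ : Type*} (q : γ → Prop) {L L' : List γ}
    (σ : Fin L.length ≃ Fin L'.length) (hget : ∀ i, L'.get (σ i) = L.get i) :
    {j | q (L'.get j)} = σ '' {i | q (L.get i)} := by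
  ext j
  rw [σ.image_eq_preimage_symm]
  show q (L'.get j) ↔ q (L.get (σ.symm j))
  rw [← hget, σ.apply_symm_apply]

variable {γ δ : Type*} (q : γ → Prop) [DecidablePred q] (f : γ → δ)

theorem foldl_ite_eq_init {L : List γ} (h : ∀ x ∈ L, ¬ q x) (v : δ) :
    L.foldl (fun v x => if q x then f x else v) v = v := by
  induction L generalizing v with
  | nil => rfl
  | cons x L ih =>
    rw [foldl_cons, if_neg (h x mem_cons_self)]
    exact ih (fun y hy => h y (mem_cons_of_mem x hy)) v

theorem foldl_ite_eq_of_isGreatest {L : List γ} {i : Fin L.length}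
    (hi : IsGreatest {j | q (L.get j)} i) (v : δ) :
    L.foldl (fun v x => if q x then f x else v) v = f (L.get i) := by
  have hsplit : L = L.take i ++ L.get i :: L.drop (i + 1) := by
    rw [get_eq_getElem, getElem_cons_drop, take_append_drop]
  have hdrop : ∀ x ∈ L.drop (i + 1), ¬ q x := by
    intro x hx hqx
    obtain ⟨k, hk, rfl⟩ := mem_iff_getElem.mp hx
    rw [getElem_drop] at hqx
    have : (i : ℕ) + 1 + k ≤ i := @hi.2 ⟨i + 1 + k, by simp at hk; omega⟩ hqx
    omega
  conv_lhs => rw [hsplit]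
  rw [foldl_append, foldl_cons, if_pos (show q (L.get i) from hi.1),
    foldl_ite_eq_init q f hdrop]

end List

open Classical in
theorem variant_apply {α β ρ : Type*} (B : α → Option β)
    (L : List ((ρ → Prop) × α × Option β)) (p : ρ) (a : α) :
    variant B L p a =
      L.foldl (fun v op => if op.1 p ∧ op.2.1 = a then op.2.2 else v) (B a) := by
  refine (List.foldl_hom (fun P : α → Option β => P a) fun P op => ?_).symm
  by_cases hp : op.1 p
  · by_cases ha : op.2.1 = a
    · subst ha; simp [hp]
    · simp [hp, ha, Function.update_of_ne (Ne.symm ha)]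
  · simp [hp]

theorem variant_perm_invariant_general {α β ρ : Type*}
    (L L' : List ((ρ → Prop) × α × Option β))
    (σ : Fin L.length ≃ Fin L'.length)
    (hget : ∀ i : Fin L.length, L'.get (σ i) = L.get i)
    (horder : ∀ i j : Fin L.length, i < j → (L.get i).2.1 = (L.get j).2.1 → σ i < σ j)
    (B : α → Option β) (p : ρ) :
    variant B L' p = variant B L p := by
  classical
  funext a
  rw [variant_apply, variant_apply]
  set q : (ρ → Prop) × α × Option β → Prop := fun op => op.1 p ∧ op.2.1 = a
  set S := {i | q (L.get i)}
  have hS' : {j | q (L'.get j)} = σ '' S := List.setOf_get_eq_image q σ hget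
  rcases S.eq_empty_or_nonempty with hS | hS
  · have hL : ∀ x ∈ L, ¬ q x := fun x hx hqx => by
      obtain ⟨i, rfl⟩ := List.mem_iff_get.mp hx
      exact hS.subset hqx
    have hL' : ∀ x ∈ L', ¬ q x := fun x hx hqx => by
      obtain ⟨j, rfl⟩ := List.mem_iff_get.mp hx
      exact (Set.image_eq_empty.mpr hS ▸ hS').subset hqx
    rw [List.foldl_ite_eq_init q _ hL, List.foldl_ite_eq_init q _ hL']
  · obtain ⟨i, hi, hmax⟩ := S.exists_max_image id S.toFinite hS
    have hmono : MonotoneOn σ S := fun i hi j hj hij =>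
      hij.eq_or_lt.elim (fun h => h ▸ le_rfl) fun h => (horder i j h (hi.2.trans hj.2.symm)).le
    have hi' : IsGreatest {j | q (L'.get j)} (σ i) := hS' ▸ hmono.map_isGreatest ⟨hi, hmax⟩
    rw [List.foldl_ite_eq_of_isGreatest q _ ⟨hi, hmax⟩,
      List.foldl_ite_eq_of_isGreatest q _ hi', hget]

/-- Unambiguity / order-independence of variant generation: permuting the list of
conditional delta operations while preserving the relative order of operations
acting on the same reference does not change the generated variants. -/
theorem variant_perm_invariant {α β ρ : Type*}
    (L L' : List ((ρ → Prop) × α × Option β))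
    (hlen : L.length = L'.length)
    (σ : Fin L.length ≃ Fin L'.length)
    (hget : ∀ i : Fin L.length, L'.get (σ i) = L.get i)
    (horder : ∀ i j : Fin L.length, i < j → (L.get i).2.1 = (L.get j).2.1 → σ i < σ j)
    (B : α → Option β) (p : ρ) :
    variant B L' p = variant B L p :=
  variant_perm_invariant_general L L' σ hget horder B p
end

section
/- Correctness of product-line projection: let Π : Set ρ be a set of products and let L' be obtained from L by deleting every operation whose activation condition fails at every product of Π, i.e. (using classical decidability) L' := L.filter (fun op => ∃ p ∈ Π, op.1 p). Then for every base program B and every p ∈ Π, variant B L' p = variant B L p. -/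
theorem List.foldl_filter_of_forall_eq_self {α β : Type*} (f : β → α → β)
    (q : α → Bool) (L : List α) (hfix : ∀ a ∈ L, q a = false → ∀ b, f b a = b) (b : β) :
    (L.filter q).foldl f b = L.foldl f b := by
  induction L generalizing b with
  | nil => rfl
  | cons a L ih =>
    have ih' := ih (fun x hx => hfix x (List.mem_cons_of_mem a hx))
    cases hqa : q a
    · simp only [List.filter_cons, hqa, List.foldl_cons, hfix a List.mem_cons_self hqa]
      exact ih' b
    · simp only [List.filter_cons, hqa, List.foldl_cons]
      exact ih' _

open Classical in
/-- Correctness of product-line projection: dropping the operations that are never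
activated on the products of `S` does not change the variants of products in `S`. -/
theorem variant_projection {α β ρ : Type*} (S : Set ρ)
    (L : List ((ρ → Prop) × α × Option β)) (B : α → Option β) :
    ∀ p ∈ S,
      variant B (L.filter (fun op => decide (∃ q ∈ S, op.1 q))) p = variant B L p := by
  intro p hp
  refine List.foldl_filter_of_forall_eq_self _ _ L (fun op _ hinactive P => ?_) B
  exact if_neg fun hact => decide_eq_false_iff_not.mp hinactive ⟨p, hp, hact⟩
end

section
/- Guarding removes that precede an add (correctness of mergeOperations in the decreasing refactoring): suppose L = L₁ ++ [(c₁, e, some d)] ++ L₂, where (c₁, e, some d) is an add on reference e. Let L₁' be obtained from L₁ by replacing every remove on reference e, i.e. every operation of the form (c, e, none), by (fun q => c q ∧ ¬ c₁ q, e, none), leaving all other operations unchanged. Then for every base program B and every product p: variant B (L₁' ++ [(c₁, e, some d)] ++ L₂) p = variant B L p. -/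
section

variable {α β ρ : Type*}

open Classical

noncomputable def applyDelta (p : ρ) (P : α → Option β) (op : (ρ → Prop) × α × Option β) :
    α → Option β :=
  if op.1 p then Function.update P op.2.1 op.2.2 else P

theorem variant_eq_foldl_applyDelta (B : α → Option β) (L : List ((ρ → Prop) × α × Option β))
    (p : ρ) : variant B L p = L.foldl (applyDelta p) B :=
  rfl

noncomputable def guardRemove (c₁ : ρ → Prop) (e : α) (op : (ρ → Prop) × α × Option β) :
    (ρ → Prop) × α × Option β :=
  if op.2.1 = e ∧ op.2.2 = none then ((fun q => op.1 q ∧ ¬ c₁ q), e, (none : Option β)) else op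

theorem applyDelta_guardRemove_of_not {c₁ : ρ → Prop} {p : ρ} (hc : ¬ c₁ p) (e : α)
    (P : α → Option β) (op : (ρ → Prop) × α × Option β) :
    applyDelta p P (guardRemove c₁ e op) = applyDelta p P op := by
  unfold guardRemove
  split_ifs with hop
  · obtain ⟨c, k, o⟩ := op
    obtain ⟨rfl, rfl⟩ := hop
    simp only [applyDelta, hc, not_false_eq_true, and_true]
  · rfl

theorem Set.EqOn.update {γ : Type*} [DecidableEq α] {f g : α → γ} {s : Set α}
    (h : Set.EqOn f g s) (k : α) (v : γ) :
    Set.EqOn (Function.update f k v) (Function.update g k v) s := by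
  intro x hx
  by_cases hxk : x = k
  · subst hxk; simp
  · simp [Function.update_of_ne hxk, h hx]

theorem Function.update_eq_update_of_eqOn_compl {γ : Type*} [DecidableEq α] {f g : α → γ}
    {a : α} (h : Set.EqOn f g {a}ᶜ) (v : γ) : Function.update f a v = Function.update g a v := by
  funext x
  by_cases hx : x = a
  · subst hx; simp
  · simp [Function.update_of_ne hx, h hx]

theorem applyDelta_guardRemove_eqOn_compl (c₁ : ρ → Prop) (p : ρ) {e : α} {P Q : α → Option β}
    (h : Set.EqOn P Q {e}ᶜ) (op : (ρ → Prop) × α × Option β) :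
    Set.EqOn (applyDelta p P (guardRemove c₁ e op)) (applyDelta p Q op) {e}ᶜ := by
  obtain ⟨c, k, o⟩ := op
  by_cases hop : k = e ∧ o = none
  · obtain ⟨rfl, rfl⟩ := hop
    intro x hx
    simp only [guardRemove, applyDelta, and_self, if_true]
    split_ifs <;> simp [Function.update_of_ne hx, h hx]
  · simp only [guardRemove, if_neg hop, applyDelta]
    split_ifs
    · exact h.update k o
    · exact h

theorem foldl_guardRemove_eqOn_compl (c₁ : ρ → Prop) (p : ρ) {e : α}
    (L : List ((ρ → Prop) × α × Option β)) {P Q : α → Option β} (h : Set.EqOn P Q {e}ᶜ) :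
    Set.EqOn ((L.map (guardRemove c₁ e)).foldl (applyDelta p) P) (L.foldl (applyDelta p) Q)
      {e}ᶜ := by
  induction L generalizing P Q with
  | nil => exact h
  | cons op L ih => exact ih (applyDelta_guardRemove_eqOn_compl c₁ p h op)

end

open Classical in
/-- Guarding removes that precede an add (correctness of `mergeOperations` in the
decreasing refactoring). -/
theorem guard_removes_before_add {α β ρ : Type*} (B : α → Option β)
    (L₁ L₂ : List ((ρ → Prop) × α × Option β)) (c₁ : ρ → Prop) (e : α) (d : β) (p : ρ) :
    variant B
        ((L₁.map (fun op =>
            if op.2.1 = e ∧ op.2.2 = none then ((fun q => op.1 q ∧ ¬ c₁ q), e, (none : Option β))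
            else op)) ++ [(c₁, e, some d)] ++ L₂) p =
      variant B (L₁ ++ [(c₁, e, some d)] ++ L₂) p := by
  change variant B (L₁.map (guardRemove c₁ e) ++ [(c₁, e, some d)] ++ L₂) p = _
  simp only [variant_eq_foldl_applyDelta, List.foldl_append, List.foldl_cons, List.foldl_nil]
  congr 1
  by_cases hc : c₁ p
  · simp only [applyDelta, if_pos hc]
    exact Function.update_eq_update_of_eqOn_compl
      (foldl_guardRemove_eqOn_compl c₁ p L₁ (Set.eqOn_refl B _)) _
  · simp only [List.foldl_map, applyDelta_guardRemove_of_not hc]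
end

section
/- One-step elimination of a first add on a reference absent from the base (correctness of mergeToBase in the decreasing refactoring): suppose B e = none and L = L₁ ++ [(c₁, e, some d)] ++ L₂, where L₁ contains no add on reference e (no operation of the form (c, e, some d')). Let L₁' be obtained from L₁ by replacing every operation (c, e, o) whose reference is e by (fun q => c q ∧ ¬ c₁ q, e, o). Then for every product p: variant B L p = variant (Function.update B e (some d)) (L₁' ++ [((fun q => ¬ c₁ q), e, none)] ++ L₂) p. -/
/-!
Evaluate both variants reference by reference, after splitting off the common suffix `L₂`.
Away from `e` the rewritten operations act exactly as before and the base programs agree.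
At `e` the left side holds `none` until the add, since `L₁` only removes `e`; so it ends
with `some d` if `c₁ p` and with `none` otherwise. On the right, when `c₁ p` holds every
operation on `e` is switched off and the value `some d` of the new base survives, and when
it fails the final remove clears `e`.
-/

section Variant

open Classical

variable {α β ρ : Type*} {B B' : α → Option β} {L : List ((ρ → Prop) × α × Option β)}
  {p : ρ} {x : α}

theorem variant_cons (op : (ρ → Prop) × α × Option β) :
    variant B (op :: L) p =
      variant (if op.1 p then Function.update B op.2.1 op.2.2 else B) L p :=
  rfl

theorem variant_append (M : List ((ρ → Prop) × α × Option β)) :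
    variant B (L ++ M) p = variant (variant B L p) M p :=
  List.foldl_append

theorem variant_singleton (op : (ρ → Prop) × α × Option β) :
    variant B [op] p = if op.1 p then Function.update B op.2.1 op.2.2 else B :=
  rfl

theorem variant_apply_congr (h : B x = B' x) : variant B L p x = variant B' L p x := by
  induction L generalizing B B' with
  | nil => exact h
  | cons op L ih =>
    rw [variant_cons, variant_cons]
    refine ih ?_
    split_ifs
    · by_cases hx : x = op.2.1
      · simp [hx]
      · simp [Function.update_of_ne hx, h]
    · exact h

theorem variant_apply_mem (S : Set (Option β)) (hB : B x ∈ S)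
    (hL : ∀ op ∈ L, op.1 p → op.2.1 = x → op.2.2 ∈ S) : variant B L p x ∈ S := by
  induction L generalizing B with
  | nil => exact hB
  | cons op L ih =>
    rw [variant_cons]
    refine ih ?_ fun op' hop' => hL op' (List.mem_cons_of_mem op hop')
    split_ifs with hp
    · by_cases hx : x = op.2.1
      · simpa [hx] using hL op List.mem_cons_self hp hx.symm
      · simpa [Function.update_of_ne hx] using hB
    · exact hB

theorem variant_map_apply_of_ne {e : α}
    {f : (ρ → Prop) × α × Option β → (ρ → Prop) × α × Option β}
    (hf : ∀ op, op.2.1 ≠ e → f op = op) (hfe : ∀ op, op.2.1 = e → (f op).2.1 = e)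
    (hx : x ≠ e) : variant B (L.map f) p x = variant B L p x := by
  induction L generalizing B with
  | nil => rfl
  | cons op L ih =>
    rw [List.map_cons, variant_cons, variant_cons]
    by_cases he : op.2.1 = e
    · have hstep : ∀ op' : (ρ → Prop) × α × Option β, op'.2.1 = e →
          (if op'.1 p then Function.update B op'.2.1 op'.2.2 else B) x = B x := by
        intro op' h'
        split_ifs
        · rw [Function.update_of_ne (h' ▸ hx)]
        · rfl
      rw [variant_apply_congr (hstep _ (hfe op he)), ih,
        variant_apply_congr (hstep op he)]
    · rw [hf op he, ih]

end Variant

open Classical in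
/-- One-step elimination of a first add on a reference absent from the base
(correctness of `mergeToBase` in the decreasing refactoring). -/
theorem first_add_to_base {α β ρ : Type*} (B : α → Option β)
    (L₁ L₂ : List ((ρ → Prop) × α × Option β)) (c₁ : ρ → Prop) (e : α) (d : β)
    (hB : B e = none)
    (hL₁ : ∀ (c : ρ → Prop) (d' : β), (c, e, some d') ∉ L₁) :
    ∀ p : ρ,
      variant B (L₁ ++ [(c₁, e, some d)] ++ L₂) p =
        variant (Function.update B e (some d))
          ((L₁.map (fun op =>
              if op.2.1 = e then ((fun q => op.1 q ∧ ¬ c₁ q), e, op.2.2) else op)) ++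
            [((fun q => ¬ c₁ q), e, (none : Option β))] ++ L₂) p := by
  intro p
  set f := fun op : (ρ → Prop) × α × Option β =>
    if op.2.1 = e then ((fun q => op.1 q ∧ ¬ c₁ q), e, op.2.2) else op
  simp only [variant_append, variant_singleton]
  congr 1
  funext x
  rcases eq_or_ne x e with rfl | hx
  · have hremoved : variant B L₁ p x = none := by
      refine variant_apply_mem {none} hB ?_
      rintro ⟨c, k, o⟩ hop - (rfl : k = x)
      cases o with
      | none => rfl
      | some d' => exact absurd hop (hL₁ c d')
    by_cases hc : c₁ p
    · have hadded : variant (Function.update B x (some d)) (L₁.map f) p x = some d := by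
        refine variant_apply_mem {some d} (Function.update_self ..) ?_
        simp only [List.mem_map]
        rintro _ ⟨op, -, rfl⟩ hactive hk
        by_cases hop : op.2.1 = x
        · simp only [f, if_pos hop] at hactive
          exact absurd hc hactive.2
        · simp only [f, if_neg hop] at hk
          exact absurd hk hop
      simp [hc, hadded]
    · simp [hc, hremoved]
  · have hrewritten :
        variant (Function.update B e (some d)) (L₁.map f) p x = variant B L₁ p x :=
      (variant_map_apply_of_ne (fun op hop => if_neg hop) (fun op hop => by simp [hop]) hx).trans
        (variant_apply_congr (Function.update_of_ne hx _ _))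
    split_ifs <;> simp [Function.update_of_ne hx, hrewritten]
end
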